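/- Let n ≥ 1, let A : ℝⁿ → ℝⁿ, V : ℝⁿ → ℝ, ψ : ℝⁿ → ℝ be smooth, let a, b : ℝ × ℝⁿ → ℂ be smooth, and let λ > 0. Define u(t,x) = a(2λt, x) b(2λt, x) e^{iλ(ψ(x) − λt)}. Then for all (t,x), writing s = 2λt and m(s,·) = a(s,·)b(s,·): i ∂ₜu(t,x) + H_{A,V}( u(t,·) )(x) = e^{iλ(ψ(x) − λt)} · [ H_{A,V}( m(s,·) )(x) + 2iλ b(s,x) ( ∂ₛa + ⟨∇ψ, ∇ₓa⟩ + (1/2) a Δψ )(s,x) + 2iλ a(s,x) ( ∂ₛb + ⟨∇ψ, ∇ₓb⟩ − i (A·∇ψ)(x) b )(s,x) + λ² m(s,x) ( 1 − |∇ψ(x)|² ) ]. -/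

import Mathlib

/-- Partial derivative `∂ⱼ` of a complex-valued function on `ℝⁿ`. -/
noncomputable def pdC {n : ℕ} (j : Fin n) (u : (Fin n → ℝ) → ℂ) (x : Fin n → ℝ) : ℂ :=
  fderiv ℝ u x (Pi.single j 1)

/-- Partial derivative `∂ⱼ` of a real-valued function on `ℝⁿ`. -/
noncomputable def pdR {n : ℕ} (j : Fin n) (f : (Fin n → ℝ) → ℝ) (x : Fin n → ℝ) : ℝ :=
  fderiv ℝ f x (Pi.single j 1)

/-- The magnetic Schrödinger operator
`H_{A,V} u = Δu − 2i A·∇u − i (div A) u − |A|² u + V u` on Euclidean `ℝⁿ`. -/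
noncomputable def magOp {n : ℕ} (A : (Fin n → ℝ) → (Fin n → ℝ)) (V : (Fin n → ℝ) → ℝ)
    (u : (Fin n → ℝ) → ℂ) (x : Fin n → ℝ) : ℂ :=
  (∑ j, pdC j (pdC j u) x)
    - 2 * Complex.I * ∑ j, (A x j : ℂ) * pdC j u x
    - Complex.I * ((∑ j, pdR j (fun y => A y j) x : ℝ) : ℂ) * u x
    - ((∑ j, (A x j) ^ 2 : ℝ) : ℂ) * u x
    + (V x : ℂ) * u x

section aux
variable {n : ℕ} (j : Fin n)

lemma contDiff_pdC {u : (Fin n → ℝ) → ℂ} (hu : ContDiff ℝ (⊤ : ℕ∞) u) : ContDiff ℝ (⊤ : ℕ∞) (pdC j u) :=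
  (hu.fderiv_right (by simp)).clm_apply contDiff_const

lemma contDiff_pdR {f : (Fin n → ℝ) → ℝ} (hf : ContDiff ℝ (⊤ : ℕ∞) f) : ContDiff ℝ (⊤ : ℕ∞) (pdR j f) :=
  (hf.fderiv_right (by simp)).clm_apply contDiff_const

lemma pdC_mul {u v : (Fin n → ℝ) → ℂ} {x} (hu : DifferentiableAt ℝ u x)
    (hv : DifferentiableAt ℝ v x) :
    pdC j (fun y => u y * v y) x = pdC j u x * v x + u x * pdC j v x := by
  simp [pdC, fderiv_fun_mul hu hv]; ring

lemma pdC_add {u v : (Fin n → ℝ) → ℂ} {x} (hu : DifferentiableAt ℝ u x)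
    (hv : DifferentiableAt ℝ v x) :
    pdC j (fun y => u y + v y) x = pdC j u x + pdC j v x := by
  simp [pdC, fderiv_fun_add hu hv]

lemma pdC_ofReal {f : (Fin n → ℝ) → ℝ} {x} (hf : DifferentiableAt ℝ f x) :
    pdC j (fun y => ((f y : ℝ) : ℂ)) x = ((pdR j f x : ℝ) : ℂ) := by
  have : fderiv ℝ (fun y => ((f y : ℝ) : ℂ)) x = Complex.ofRealCLM.comp (fderiv ℝ f x) :=
    (Complex.ofRealCLM.hasFDerivAt.comp x hf.hasFDerivAt).fderiv
  simp [pdC, pdR, this]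

lemma pdC_cexp {h : (Fin n → ℝ) → ℂ} {x} (hh : DifferentiableAt ℝ h x) :
    pdC j (fun y => Complex.exp (h y)) x = Complex.exp (h x) * pdC j h x := by
  have := (hh.hasFDerivAt.cexp).fderiv
  simp [pdC, this]

lemma pdC_const_mul {u : (Fin n → ℝ) → ℂ} {x} (c : ℂ) (hu : DifferentiableAt ℝ u x) :
    pdC j (fun y => c * u y) x = c * pdC j u x := by
  simp [pdC, fderiv_const_mul hu c]

/-- first derivative of a product with an "eigenfunction" E -/
lemma keyD {γ E : (Fin n → ℝ) → ℂ} {p : (Fin n → ℝ) → ℝ} {c : ℂ}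
    (hγ : ContDiff ℝ (⊤ : ℕ∞) γ) (hE : ContDiff ℝ (⊤ : ℕ∞) E)
    (hEy : ∀ y, pdC j E y = c * ((p y : ℝ) : ℂ) * E y) (x : Fin n → ℝ) :
    pdC j (fun y => γ y * E y) x
      = pdC j γ x * E x + c * ((p x : ℝ) : ℂ) * (γ x * E x) := by
  rw [pdC_mul j (hγ.differentiable (by simp) x) (hE.differentiable (by simp) x), hEy x]; ring

/-- second derivative of a product with an "eigenfunction" E -/
lemma keyDD {γ E : (Fin n → ℝ) → ℂ} {p : (Fin n → ℝ) → ℝ} {c : ℂ}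
    (hγ : ContDiff ℝ (⊤ : ℕ∞) γ) (hE : ContDiff ℝ (⊤ : ℕ∞) E) (hp : ContDiff ℝ (⊤ : ℕ∞) p)
    (hEy : ∀ y, pdC j E y = c * ((p y : ℝ) : ℂ) * E y) (x : Fin n → ℝ) :
    pdC j (pdC j (fun y => γ y * E y)) x
      = pdC j (pdC j γ) x * E x + 2 * c * ((p x : ℝ) : ℂ) * pdC j γ x * E x
        + c * ((pdR j p x : ℝ) : ℂ) * (γ x * E x)
        + c ^ 2 * ((p x : ℝ) : ℂ) ^ 2 * (γ x * E x) := by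
  have hγd := hγ.differentiable (by simp)
  have hEd := hE.differentiable (by simp)
  have hγ1 := (contDiff_pdC j hγ).differentiable (by simp)
  have hpC : ContDiff ℝ (⊤ : ℕ∞) (fun y => ((p y : ℝ) : ℂ)) := Complex.ofRealCLM.contDiff.comp hp
  have hpd := hpC.differentiable (by simp)
  have step1 : pdC j (fun y => γ y * E y)
      = fun y => pdC j γ y * E y + c * (((p y : ℝ) : ℂ) * (γ y * E y)) := by
    funext y
    rw [pdC_mul j (hγd y) (hEd y), hEy y]; ring
  rw [step1]
  have d1 : DifferentiableAt ℝ (fun z => pdC j γ z * E z) x := (hγ1 x).mul (hEd x)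
  have d2 : DifferentiableAt ℝ (fun z => ((p z : ℝ) : ℂ) * (γ z * E z)) x :=
    (hpd x).mul ((hγd x).mul (hEd x))
  have hsplit := pdC_add j (u := fun y => pdC j γ y * E y)
    (v := fun y => c * (((p y : ℝ) : ℂ) * (γ y * E y))) d1 (d2.const_mul c)
  rw [hsplit, pdC_mul j (hγ1 x) (hEd x), hEy x,
    pdC_const_mul j c d2, pdC_mul j (u := fun y => ((p y : ℝ) : ℂ)) (v := fun y => γ y * E y) (hpd x) ((hγd x).mul (hEd x)),
    pdC_ofReal j (hp.differentiable (by simp) x),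
    pdC_mul j (hγd x) (hEd x), hEy x]
  ring

variable {ψ : (Fin n → ℝ) → ℝ} (lam t : ℝ)

lemma E_smooth (hψ : ContDiff ℝ (⊤ : ℕ∞) ψ) :
    ContDiff ℝ (⊤ : ℕ∞) (fun z : Fin n → ℝ =>
      Complex.exp (Complex.I * ((lam * (ψ z - lam * t) : ℝ) : ℂ))) :=
  (contDiff_const.mul (Complex.ofRealCLM.contDiff.comp
    (contDiff_const.mul (hψ.sub contDiff_const)))).cexp

lemma E_deriv (hψ : ContDiff ℝ (⊤ : ℕ∞) ψ) (y : Fin n → ℝ) :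
    pdC j (fun z => Complex.exp (Complex.I * ((lam * (ψ z - lam * t) : ℝ) : ℂ))) y
      = (Complex.I * lam) * ((pdR j ψ y : ℝ) : ℂ)
          * Complex.exp (Complex.I * ((lam * (ψ y - lam * t) : ℝ) : ℂ)) := by
  have hf : DifferentiableAt ℝ (fun z => lam * (ψ z - lam * t)) y :=
    ((hψ.differentiable (by simp) y).sub_const _).const_mul lam
  have h1 : DifferentiableAt ℝ (fun z => ((lam * (ψ z - lam * t) : ℝ) : ℂ)) y :=
    Complex.ofRealCLM.differentiable.differentiableAt.comp y hf
  have h2 : DifferentiableAt ℝ (fun z => Complex.I * ((lam * (ψ z - lam * t) : ℝ) : ℂ)) y :=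
    h1.const_mul Complex.I
  rw [pdC_cexp j h2, pdC_const_mul j Complex.I h1, pdC_ofReal j hf]
  have hpd : pdR j (fun z => lam * (ψ z - lam * t)) y = lam * pdR j ψ y := by
    unfold pdR
    rw [fderiv_const_mul ((hψ.differentiable (by simp) y).sub_const _) lam, fderiv_sub_const]
    simp
  rw [hpd]; push_cast; ring

end aux

/-- WKB remainder computation.  For smooth `A, V, ψ, a, b` and `λ > 0`,
with `u (t,x) = a (2λt, x) b (2λt, x) e^{iλ(ψ(x) − λt)}` and `s = 2λt`, one has
`i ∂ₜu + H_{A,V} u = e^{iλ(ψ − λt)} [ H_{A,V}(ab)(s,·)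
  + 2iλ b (∂ₛa + ⟨∇ψ,∇ₓa⟩ + a Δψ / 2) + 2iλ a (∂ₛb + ⟨∇ψ,∇ₓb⟩ − i (A·∇ψ) b)
  + λ² a b (1 − |∇ψ|²) ]`. -/
theorem wkb_remainder (n : ℕ) (hn : 1 ≤ n)
    (A : (Fin n → ℝ) → (Fin n → ℝ)) (V ψ : (Fin n → ℝ) → ℝ)
    (a b : ℝ × (Fin n → ℝ) → ℂ) (lam : ℝ)
    (hA : ContDiff ℝ (⊤ : ℕ∞) A) (hV : ContDiff ℝ (⊤ : ℕ∞) V) (hψ : ContDiff ℝ (⊤ : ℕ∞) ψ)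
    (ha : ContDiff ℝ (⊤ : ℕ∞) a) (hb : ContDiff ℝ (⊤ : ℕ∞) b) (hlam : 0 < lam)
    (t : ℝ) (x : Fin n → ℝ) :
    Complex.I * deriv (fun t' : ℝ => a (2 * lam * t', x) * b (2 * lam * t', x)
        * Complex.exp (Complex.I * ((lam * (ψ x - lam * t') : ℝ) : ℂ))) t
      + magOp A V (fun y => a (2 * lam * t, y) * b (2 * lam * t, y)
        * Complex.exp (Complex.I * ((lam * (ψ y - lam * t) : ℝ) : ℂ))) x
    = Complex.exp (Complex.I * ((lam * (ψ x - lam * t) : ℝ) : ℂ)) *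
      ( magOp A V (fun y => a (2 * lam * t, y) * b (2 * lam * t, y)) x
        + 2 * Complex.I * (lam : ℂ) * b (2 * lam * t, x) *
          ( deriv (fun s : ℝ => a (s, x)) (2 * lam * t)
            + ∑ j, ((pdR j ψ x : ℝ) : ℂ) * pdC j (fun y => a (2 * lam * t, y)) x
            + (1/2) * a (2 * lam * t, x) * ((∑ j, pdR j (pdR j ψ) x : ℝ) : ℂ) )
        + 2 * Complex.I * (lam : ℂ) * a (2 * lam * t, x) *
          ( deriv (fun s : ℝ => b (s, x)) (2 * lam * t)
            + ∑ j, ((pdR j ψ x : ℝ) : ℂ) * pdC j (fun y => b (2 * lam * t, y)) x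
            - Complex.I * ((∑ j, A x j * pdR j ψ x : ℝ) : ℂ) * b (2 * lam * t, x) )
        + (lam : ℂ) ^ 2 * (a (2 * lam * t, x) * b (2 * lam * t, x)) *
            (1 - ((∑ j, (pdR j ψ x) ^ 2 : ℝ) : ℂ)) ) := by
  have hα : ContDiff ℝ (⊤ : ℕ∞) (fun y => a (2 * lam * t, y)) :=
    ha.comp (contDiff_const.prodMk contDiff_id)
  have hβ : ContDiff ℝ (⊤ : ℕ∞) (fun y => b (2 * lam * t, y)) :=
    hb.comp (contDiff_const.prodMk contDiff_id)
  have hγ : ContDiff ℝ (⊤ : ℕ∞) (fun y => a (2 * lam * t, y) * b (2 * lam * t, y)) := hα.mul hβ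
  have hE := E_smooth (ψ := ψ) lam t hψ
  -- time derivative
  have et : deriv (fun t' : ℝ => a (2 * lam * t', x) * b (2 * lam * t', x)
        * Complex.exp (Complex.I * ((lam * (ψ x - lam * t') : ℝ) : ℂ))) t
      = ( (2 * lam : ℂ) * deriv (fun s : ℝ => a (s, x)) (2 * lam * t) * b (2 * lam * t, x)
        + a (2 * lam * t, x) * ((2 * lam : ℂ) * deriv (fun s : ℝ => b (s, x)) (2 * lam * t))
        + a (2 * lam * t, x) * b (2 * lam * t, x) * (-Complex.I * (lam : ℂ) ^ 2) )
      * Complex.exp (Complex.I * ((lam * (ψ x - lam * t) : ℝ) : ℂ)) := by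
    have h2 : HasDerivAt (fun t' : ℝ => 2 * lam * t') (2 * lam) t := by
      simpa using (hasDerivAt_id t).const_mul (2 * lam)
    have haA : HasDerivAt (fun s : ℝ => a (s, x))
        (deriv (fun s : ℝ => a (s, x)) (2 * lam * t)) (2 * lam * t) :=
      ((ha.comp (contDiff_id.prodMk contDiff_const)).differentiable (by simp) _).hasDerivAt
    have hbA : HasDerivAt (fun s : ℝ => b (s, x))
        (deriv (fun s : ℝ => b (s, x)) (2 * lam * t)) (2 * lam * t) :=
      ((hb.comp (contDiff_id.prodMk contDiff_const)).differentiable (by simp) _).hasDerivAt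
    have hr1 : HasDerivAt (fun t' : ℝ => lam * t') (lam * 1) t := (hasDerivAt_id t).const_mul lam
    have hr3 : HasDerivAt (fun t' : ℝ => lam * (ψ x - lam * t')) (lam * -(lam * 1)) t :=
      (hr1.const_sub (ψ x)).const_mul lam
    have hr4 : HasDerivAt (fun t' : ℝ => ((lam * (ψ x - lam * t') : ℝ) : ℂ))
        ((lam * -(lam * 1) : ℝ) : ℂ) t := hr3.ofReal_comp
    have hr5 := hr4.const_mul Complex.I
    have hexp := hr5.cexp
    have hab := (haA.scomp t h2).mul (hbA.scomp t h2)
    have h0 := hab.mul hexp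
    have h1 := h0.deriv
    simp only [Function.comp_def, Complex.real_smul, Pi.mul_def] at h1
    rw [h1]; push_cast; ring
  -- second-derivative sum
  have e1 : ∑ j, pdC j (pdC j (fun y => a (2 * lam * t, y) * b (2 * lam * t, y)
        * Complex.exp (Complex.I * ((lam * (ψ y - lam * t) : ℝ) : ℂ)))) x
      = ( (∑ j, pdC j (pdC j (fun y => a (2 * lam * t, y) * b (2 * lam * t, y))) x)
          + 2 * Complex.I * (lam : ℂ) *
            ( (∑ j, ((pdR j ψ x : ℝ) : ℂ) * pdC j (fun y => a (2 * lam * t, y)) x)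
                * b (2 * lam * t, x)
              + a (2 * lam * t, x)
                * ∑ j, ((pdR j ψ x : ℝ) : ℂ) * pdC j (fun y => b (2 * lam * t, y)) x )
          + Complex.I * (lam : ℂ) * ((∑ j, pdR j (pdR j ψ) x : ℝ) : ℂ)
              * (a (2 * lam * t, x) * b (2 * lam * t, x))
          - (lam : ℂ) ^ 2 * ((∑ j, (pdR j ψ x) ^ 2 : ℝ) : ℂ)
              * (a (2 * lam * t, x) * b (2 * lam * t, x)) )
        * Complex.exp (Complex.I * ((lam * (ψ x - lam * t) : ℝ) : ℂ)) := by
    have step := Finset.sum_congr rfl (fun (j : Fin n) (_ : j ∈ Finset.univ) =>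
      keyDD j hγ hE (contDiff_pdR j hψ) (fun y => E_deriv j lam t hψ y) x)
    rw [step]
    have split : ∀ j : Fin n, pdC j (fun y => a (2 * lam * t, y) * b (2 * lam * t, y)) x
        = pdC j (fun y => a (2 * lam * t, y)) x * b (2 * lam * t, x)
          + a (2 * lam * t, x) * pdC j (fun y => b (2 * lam * t, y)) x :=
      fun j => pdC_mul j (hα.differentiable (by simp) x) (hβ.differentiable (by simp) x)
    push_cast
    simp only [add_mul, sub_mul, mul_add, Finset.mul_sum, Finset.sum_mul]
    rw [← Finset.sum_add_distrib, ← Finset.sum_add_distrib, ← Finset.sum_add_distrib,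
      ← Finset.sum_sub_distrib]
    refine Finset.sum_congr rfl fun j _ => ?_
    rw [split j]
    have hI : Complex.I * Complex.I = -1 := Complex.I_mul_I
    linear_combination ((lam : ℂ) ^ 2 * ((pdR j ψ x : ℝ) : ℂ) ^ 2
      * (a (2 * lam * t, x) * b (2 * lam * t, x))
      * Complex.exp (Complex.I * ((lam : ℂ) * ((ψ x : ℂ) - (lam : ℂ) * (t : ℂ))))) * hI
  -- first-derivative sum (magnetic term)
  have e2 : ∑ j, (A x j : ℂ) * pdC j (fun y => a (2 * lam * t, y) * b (2 * lam * t, y)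
        * Complex.exp (Complex.I * ((lam * (ψ y - lam * t) : ℝ) : ℂ))) x
      = ( (∑ j, (A x j : ℂ) * pdC j (fun y => a (2 * lam * t, y) * b (2 * lam * t, y)) x)
          + Complex.I * (lam : ℂ) * ((∑ j, A x j * pdR j ψ x : ℝ) : ℂ)
              * (a (2 * lam * t, x) * b (2 * lam * t, x)) )
        * Complex.exp (Complex.I * ((lam * (ψ x - lam * t) : ℝ) : ℂ)) := by
    have step := Finset.sum_congr rfl (fun (j : Fin n) (_ : j ∈ Finset.univ) =>
      congrArg (fun z => (A x j : ℂ) * z)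
        (keyD j hγ hE (fun y => E_deriv j lam t hψ y) x))
    rw [step]
    push_cast
    simp only [add_mul, Finset.mul_sum, Finset.sum_mul]
    rw [← Finset.sum_add_distrib]
    exact Finset.sum_congr rfl fun j _ => by push_cast; ring
  simp only [magOp]
  rw [et, e1, e2]
  have hI : Complex.I * Complex.I = -1 := Complex.I_mul_I
  linear_combination (-(lam : ℂ) ^ 2 * (a (2 * lam * t, x) * b (2 * lam * t, x))
    * Complex.exp (Complex.I * ((lam * (ψ x - lam * t) : ℝ) : ℂ))) * hI
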